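/- arXiv:2210.09029 — 4 statements merged into one kernel-verified Lean document; each statement's English description precedes it below -/
import Mathlib

section
/- Up to a set of Lebesgue measure zero, D_B coincides with the set 2^{-cone^∨(B)} := { (±2^{-q_1},…,±2^{-q_d}) : q ∈ cone^∨(B) }, where cone^∨(B) = {q ∈ ℝ^d : ⟨b,q⟩ ≥ 0 for all b ∈ cone(B)} is the dual cone. -/
open Finset Real MeasureTheory

/-- `|x^b| = ∏_ν |x_ν|^{b_ν}`. -/
noncomputable def monAbs {d : ℕ} (x b : Fin d → ℝ) : ℝ := ∏ ν, |x ν| ^ (b ν)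

/-- `cone(B)`. -/
def coneF {d : ℕ} (B : Finset (Fin d → ℝ)) : Set (Fin d → ℝ) :=
  {y | ∃ α : (Fin d → ℝ) → ℝ, (∀ b, 0 ≤ α b) ∧ y = ∑ b ∈ B, α b • b}

/-- `D_S`. -/
noncomputable def Dom {d : ℕ} (S : Set (Fin d → ℝ)) : Set (Fin d → ℝ) :=
  {x | ∀ b ∈ S, monAbs x b ≤ 1}

/-- dot product `⟨a,b⟩`. -/
def dotp {d : ℕ} (a b : Fin d → ℝ) : ℝ := ∑ ν, a ν * b ν

/-- dual cone `cone^∨(B) = {q : ⟨b,q⟩ ≥ 0 for all b ∈ cone(B)}`. -/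
def dualCone {d : ℕ} (B : Finset (Fin d → ℝ)) : Set (Fin d → ℝ) :=
  {q | ∀ b ∈ coneF B, 0 ≤ dotp b q}

/-- `2^{-K} = {(±2^{-q_1},…,±2^{-q_d}) : q ∈ K}`. -/
noncomputable def twoNeg {d : ℕ} (K : Set (Fin d → ℝ)) : Set (Fin d → ℝ) :=
  {x | ∃ q ∈ K, ∀ ν, |x ν| = (2:ℝ) ^ (-(q ν))}

lemma monAbs_eq_rpow {d : ℕ} (x q : Fin d → ℝ)
    (habs : ∀ ν, |x ν| = (2:ℝ) ^ (-(q ν))) (b : Fin d → ℝ) :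
    monAbs x b = (2:ℝ) ^ (-(dotp b q)) := by
  unfold monAbs dotp
  have : ∀ ν, |x ν| ^ (b ν) = (2:ℝ) ^ (-(q ν) * b ν) := by
    intro ν
    rw [habs ν, ← Real.rpow_mul (by norm_num)]
  simp only [this]
  rw [← Real.rpow_sum_of_pos (by norm_num)]
  congr 1
  rw [← Finset.sum_neg_distrib]
  exact Finset.sum_congr rfl fun ν _ => by ring

lemma key {d : ℕ} (B : Finset (Fin d → ℝ)) (x : Fin d → ℝ) (hx : ∀ ν, x ν ≠ 0) :
    x ∈ Dom (↑B : Set (Fin d → ℝ)) ↔ x ∈ twoNeg (dualCone B) := by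
  have hdotlin : ∀ (α : (Fin d → ℝ) → ℝ) (q : Fin d → ℝ),
      dotp (∑ c ∈ B, α c • c) q = ∑ c ∈ B, α c * dotp c q := by
    intro α q
    unfold dotp
    simp only [Finset.sum_apply, Pi.smul_apply, smul_eq_mul, Finset.sum_mul, Finset.mul_sum]
    rw [Finset.sum_comm]
    exact Finset.sum_congr rfl fun c _ => Finset.sum_congr rfl fun ν _ => by ring
  constructor
  · intro hxD
    set q : Fin d → ℝ := fun ν => -Real.logb 2 |x ν| with hq
    have habs : ∀ ν, |x ν| = (2:ℝ) ^ (-(q ν)) := by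
      intro ν
      rw [hq]
      simp only [neg_neg]
      rw [Real.rpow_logb (by norm_num) (by norm_num) (abs_pos.mpr (hx ν))]
    refine ⟨q, ?_, habs⟩
    rintro b ⟨α, hα, rfl⟩
    rw [hdotlin]
    apply Finset.sum_nonneg
    intro c hc
    apply mul_nonneg (hα c)
    have h1 : monAbs x c ≤ 1 := hxD c hc
    rw [monAbs_eq_rpow x q habs c] at h1
    have : (2:ℝ) ^ (-(dotp c q)) ≤ (2:ℝ) ^ (0:ℝ) := by simpa using h1
    have := (Real.rpow_le_rpow_left_iff (by norm_num : (1:ℝ) < 2)).mp this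
    linarith
  · rintro ⟨q, hqK, habs⟩ b hb
    rw [monAbs_eq_rpow x q habs b]
    have hbc : b ∈ coneF B := by
      refine ⟨fun c => if c = b then 1 else 0, fun c => by positivity, ?_⟩
      rw [Finset.sum_congr rfl fun c _ => ite_smul _ _ _ _]
      simp [Finset.sum_ite_eq' B b, Finset.mem_coe.mp hb]
    have h0 : 0 ≤ dotp b q := hqK b hbc
    calc (2:ℝ) ^ (-(dotp b q)) ≤ (2:ℝ) ^ (0:ℝ) := by
          apply Real.rpow_le_rpow_of_exponent_le (by norm_num); linarith
      _ = 1 := by norm_num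

lemma hyperplane_vol (d : ℕ) (ν : Fin d) : volume {x : Fin d → ℝ | x ν = 0} = 0 := by
  have h : {x : Fin d → ℝ | x ν = 0} =
      Set.pi Set.univ (fun i => if i = ν then ({0} : Set ℝ) else Set.univ) := by
    ext x
    simp only [Set.mem_setOf_eq, Set.mem_pi, Set.mem_univ, forall_true_left]
    constructor
    · intro h i
      by_cases hi : i = ν <;> simp [hi, h]
    · intro h
      simpa using h ν
  rw [h, volume_pi_pi]
  exact Finset.prod_eq_zero (Finset.mem_univ ν) (by simp)

/-- `D_B` coincides with `2^{-cone^∨(B)}` up to a set of Lebesgue measure zero. -/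
theorem statement1 (d : ℕ) (B : Finset (Fin d → ℝ))
    (hB : ∀ b ∈ B, ∀ ν, ∃ q : ℚ, b ν = (q : ℝ)) :
    volume (symmDiff (Dom (↑B : Set (Fin d → ℝ))) (twoNeg (dualCone B))) = 0 := by
  have hsub : symmDiff (Dom (↑B : Set (Fin d → ℝ))) (twoNeg (dualCone B)) ⊆
      ⋃ ν, {x : Fin d → ℝ | x ν = 0} := by
    intro x hx
    by_contra h
    simp only [Set.mem_iUnion, Set.mem_setOf_eq, not_exists] at h
    have hiff := key B x h
    rw [Set.mem_symmDiff] at hx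
    rcases hx with ⟨h1, h2⟩ | ⟨h1, h2⟩
    · exact h2 (hiff.mp h1)
    · exact h2 (hiff.mpr h1)
  exact measure_mono_null hsub (measure_iUnion_null fun ν => hyperplane_vol d ν)
end

section
/- If cone(B) is not strongly convex, i.e. cone(B) ∩ (−cone(B)) contains a nonzero vector, then D_B has Lebesgue measure zero. -/
/-!
Off the coordinate hyperplanes, the substitution `y = log |x|` turns `|x^b| ≤ 1` into the linear
inequality `⟨b, y⟩ ≤ 0`, which then holds on all of `cone(B)`. Applied to `r` and `-r` it forces
`⟨r, log |x|⟩ = 0`, and this hypersurface is null by Fubini: its slices in a direction `ν` with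
`r ν ≠ 0` have at most three points.
-/

open Finset Real MeasureTheory

noncomputable def logAbs {ι : Type*} (x : ι → ℝ) : ι → ℝ := fun ν => Real.log |x ν|

lemma log_monAbs {d : ℕ} {x : Fin d → ℝ} (hx : ∀ ν, x ν ≠ 0) (b : Fin d → ℝ) :
    Real.log (monAbs x b) = b ⬝ᵥ logAbs x := by
  have habs : ∀ ν, 0 < |x ν| := fun ν => abs_pos.2 (hx ν)
  rw [monAbs, Real.log_prod fun ν _ => (Real.rpow_pos_of_pos (habs ν) _).ne']
  simp only [Real.log_rpow (habs _), dotProduct, logAbs]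

lemma dotProduct_nonpos_of_mem_coneF {d : ℕ} {B : Finset (Fin d → ℝ)} {v : Fin d → ℝ}
    (hB : ∀ b ∈ B, b ⬝ᵥ v ≤ 0) {y : Fin d → ℝ} (hy : y ∈ coneF B) : y ⬝ᵥ v ≤ 0 := by
  obtain ⟨α, hα, rfl⟩ := hy
  rw [sum_dotProduct]
  exact Finset.sum_nonpos fun b hb => by
    rw [smul_dotProduct, smul_eq_mul]; exact mul_nonpos_of_nonneg_of_nonpos (hα b) (hB b hb)

lemma dotProduct_eq_zero_of_mem_coneF_of_neg_mem {d : ℕ} {B : Finset (Fin d → ℝ)}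
    {v : Fin d → ℝ} (hB : ∀ b ∈ B, b ⬝ᵥ v ≤ 0) {r : Fin d → ℝ} (hr : r ∈ coneF B)
    (hr' : -r ∈ coneF B) : r ⬝ᵥ v = 0 := by
  have := dotProduct_nonpos_of_mem_coneF hB hr'
  rw [neg_dotProduct] at this
  linarith [dotProduct_nonpos_of_mem_coneF hB hr]

lemma Dom_subset_of_mem_coneF_of_neg_mem {d : ℕ} {B : Finset (Fin d → ℝ)} {r : Fin d → ℝ}
    (hr : r ∈ coneF B) (hr' : -r ∈ coneF B) :
    Dom (B : Set (Fin d → ℝ)) ⊆ {x | ∃ ν, x ν = 0} ∪ {x | r ⬝ᵥ logAbs x = 0} := by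
  intro x hx
  by_cases hx0 : ∃ ν, x ν = 0
  · exact Or.inl hx0
  push Not at hx0
  refine Or.inr (dotProduct_eq_zero_of_mem_coneF_of_neg_mem (fun b hb => ?_) hr hr')
  rw [← log_monAbs hx0]
  exact Real.log_nonpos (Finset.prod_nonneg fun ν _ => by positivity) (hx b hb)

lemma volume_setOf_exists_eq_zero {ι : Type*} [Fintype ι] :
    volume {x : ι → ℝ | ∃ ν, x ν = 0} = 0 := by
  rw [show {x : ι → ℝ | ∃ ν, x ν = 0} =
      ⋃ ν, (LinearMap.ker (LinearMap.proj ν : (ι → ℝ) →ₗ[ℝ] ℝ) : Set (ι → ℝ)) by ext; simp]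
  refine measure_iUnion_null fun ν => Measure.addHaar_submodule _ _ fun h => ?_
  classical
  simpa using LinearMap.congr_fun (LinearMap.ker_eq_top.1 h) (Pi.single ν 1)

lemma finite_setOf_mul_log_abs_add_eq_zero {a : ℝ} (ha : a ≠ 0) (c : ℝ) :
    {t : ℝ | a * Real.log |t| + c = 0}.Finite := by
  refine (Set.toFinite {0, Real.exp (-c / a), -Real.exp (-c / a)}).subset fun t ht => ?_
  by_cases ht0 : t = 0
  · exact Or.inl ht0
  have hlog : Real.log |t| = -c / a := by
    rw [eq_div_iff ha]; linarith [show a * Real.log |t| + c = 0 from ht]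
  rw [← hlog, Real.exp_log (abs_pos.2 ht0)]
  rcases abs_choice t with h | h <;> simp [h]

lemma volume_eq_zero_of_volume_slice_eq_zero {n : ℕ} (i : Fin (n + 1))
    {A : Set (Fin (n + 1) → ℝ)} (hA : MeasurableSet A)
    (h : ∀ y : Fin n → ℝ, volume {t : ℝ | i.insertNth t y ∈ A} = 0) :
    volume A = 0 := by
  have hmp :=
    (measurePreserving_piFinSuccAbove (fun _ : Fin (n + 1) => (volume : Measure ℝ)) i).symm
  set e := (MeasurableEquiv.piFinSuccAbove (fun _ : Fin (n + 1) => ℝ) i).symm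
  have hslice : ∀ y : Fin n → ℝ,
      (fun t => (t, y)) ⁻¹' (e ⁻¹' A) = {t : ℝ | i.insertNth t y ∈ A} := fun y => by
    ext t; simp [e, MeasurableEquiv.piFinSuccAbove_symm_apply, Fin.insertNthEquiv]
  rw [volume_pi, ← hmp.map_eq, Measure.map_apply e.measurable hA,
    Measure.prod_apply_symm (e.measurable hA)]
  simp [hslice, h]

lemma volume_setOf_dotProduct_logAbs_eq_zero {d : ℕ} {r : Fin d → ℝ} (hr : r ≠ 0) :
    volume {x : Fin d → ℝ | r ⬝ᵥ logAbs x = 0} = 0 := by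
  obtain ⟨ν₀, hν₀⟩ := Function.ne_iff.1 hr
  cases d with
  | zero => exact ν₀.elim0
  | succ n =>
  have hmeas : Measurable fun x : Fin (n + 1) → ℝ => r ⬝ᵥ logAbs x := by
    unfold dotProduct logAbs; fun_prop
  refine volume_eq_zero_of_volume_slice_eq_zero ν₀ (measurableSet_eq_fun hmeas measurable_const)
    fun y => ?_
  have hslice : {t : ℝ | ν₀.insertNth t y ∈ {x | r ⬝ᵥ logAbs x = 0}} =
      {t | r ν₀ * Real.log |t| + ∑ k, r (ν₀.succAbove k) * Real.log |y k| = 0} := by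
    ext t; simp [dotProduct, logAbs, Fin.sum_univ_succAbove _ ν₀]
  rw [hslice]
  exact (finite_setOf_mul_log_abs_add_eq_zero hν₀ _).measure_zero _

theorem statement2_general (d : ℕ) (B : Finset (Fin d → ℝ))
    (r : Fin d → ℝ) (hr : r ≠ 0) (hr1 : r ∈ coneF B) (hr2 : -r ∈ coneF B) :
    volume (Dom (↑B : Set (Fin d → ℝ))) = 0 :=
  measure_mono_null (Dom_subset_of_mem_coneF_of_neg_mem hr1 hr2)
    (measure_union_null volume_setOf_exists_eq_zero (volume_setOf_dotProduct_logAbs_eq_zero hr))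

/-- If `cone(B)` is not strongly convex, i.e. contains a nonzero `r` together with `-r`,
then `D_B` has Lebesgue measure zero. -/
theorem statement2 (d : ℕ) (B : Finset (Fin d → ℝ))
    (hB : ∀ b ∈ B, ∀ ν, ∃ q : ℚ, b ν = (q : ℝ))
    (r : Fin d → ℝ) (hr : r ≠ 0) (hr1 : r ∈ coneF B) (hr2 : -r ∈ coneF B) :
    volume (Dom (↑B : Set (Fin d → ℝ))) = 0 :=
  statement2_general d B r hr hr1 hr2
end

section
/- For integers p ≥ 1 and reals 0 < τ < δ, there is a constant C such that for all λ > 0: Σ over (α₁,…,α_p) ∈ ℤ₊^p of 2^{+(α₁+⋯+α_p)} · min{1, (λ·2^{+(α₁+⋯+α_p)δ})^{−1/τ}} ≤ C · λ^{−1/δ} · (|log λ| + 1)^{p−1}. -/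
open Finset Real

/-- `y^k ≤ k! * exp y` for `y ≥ 0`. -/
lemma aux_pow_le_exp (k : ℕ) {y : ℝ} (hy : 0 ≤ y) :
    y ^ k ≤ k.factorial * Real.exp y := by
  have h1 : y ^ k / k.factorial ≤ Real.exp y := by
    calc y ^ k / k.factorial ≤ ∑ i ∈ Finset.range (k+1), y ^ i / i.factorial := by
          refine Finset.single_le_sum (f := fun i => y ^ i / i.factorial) ?_ ?_
          · intro i _; positivity
          · simp
      _ ≤ Real.exp y := Real.sum_le_exp_of_nonneg hy _
  have hk : (0:ℝ) < k.factorial := by positivity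
  calc y ^ k = (y ^ k / k.factorial) * k.factorial := by field_simp
    _ ≤ Real.exp y * k.factorial := by
        exact mul_le_mul_of_nonneg_right h1 hk.le
    _ = k.factorial * Real.exp y := by ring

/-- bound for sum of `exp(-β|n+u|)` over any finset of naturals. -/
lemma aux_geo {β : ℝ} (hβ : 0 < β) (u : ℝ) (T : Finset ℕ) :
    ∑ n ∈ T, Real.exp (-(β * |(n:ℝ) + u|)) ≤
      2 * Real.exp β * (1 - Real.exp (-β))⁻¹ := by
  set r : ℝ := Real.exp (-β) with hr_def
  have hr0 : 0 ≤ r := (Real.exp_pos _).le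
  have hr1 : r < 1 := by
    rw [hr_def]
    exact Real.exp_lt_one_iff.mpr (by linarith)
  have hsum : Summable (fun k : ℕ => r ^ k) := summable_geometric_of_lt_one hr0 hr1
  have htsum : ∑' k : ℕ, r ^ k = (1 - r)⁻¹ := tsum_geometric_of_lt_one hr0 hr1
  set m : ℤ := ⌈-u⌉ with hm_def
  have hmu0 : 0 ≤ (m:ℝ) + u := by
    have := Int.le_ceil (-u); rw [← hm_def] at this; linarith
  have hmu1 : (m:ℝ) + u < 1 := by
    have := Int.ceil_lt_add_one (-u); rw [← hm_def] at this; linarith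
  have key : ∀ n : ℕ, Real.exp (-(β * |(n:ℝ) + u|)) ≤
      Real.exp β * r ^ ((n:ℤ) - m).natAbs := by
    intro n
    have habs : (((((n:ℤ) - m).natAbs : ℕ)):ℝ) ≤ |(n:ℝ) + u| + 1 := by
      have h1 : ((((n:ℤ) - m).natAbs : ℕ):ℝ) = |((n:ℝ) - m)| := by
        push_cast [Nat.cast_natAbs]
        norm_num
      rw [h1]
      have : (n:ℝ) - m = ((n:ℝ) + u) - ((m:ℝ) + u) := by ring
      rw [this]
      calc |((n:ℝ) + u) - ((m:ℝ) + u)| ≤ |(n:ℝ) + u| + |(m:ℝ) + u| := abs_sub _ _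
        _ ≤ |(n:ℝ) + u| + 1 := by
            have : |(m:ℝ) + u| ≤ 1 := by rw [abs_le]; constructor <;> linarith
            linarith
    have h2 : Real.exp β * r ^ ((n:ℤ) - m).natAbs =
        Real.exp (β - β * (((n:ℤ) - m).natAbs : ℕ)) := by
      rw [hr_def, ← Real.exp_nat_mul, ← Real.exp_add]
      ring_nf
    rw [h2, Real.exp_le_exp]
    nlinarith [abs_nonneg ((n:ℝ) + u)]
  calc ∑ n ∈ T, Real.exp (-(β * |(n:ℝ) + u|))
      ≤ ∑ n ∈ T, Real.exp β * r ^ ((n:ℤ) - m).natAbs :=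
        Finset.sum_le_sum fun n _ => key n
    _ = Real.exp β * ∑ n ∈ T, r ^ ((n:ℤ) - m).natAbs := by rw [Finset.mul_sum]
    _ ≤ Real.exp β * (2 * (1 - r)⁻¹) := by
        refine mul_le_mul_of_nonneg_left ?_ (Real.exp_pos _).le
        have hsplit := Finset.sum_filter_add_sum_filter_not T (fun n => m ≤ (n:ℤ))
            (fun n => r ^ ((n:ℤ) - m).natAbs)
        rw [← hsplit]
        have part : ∀ (s : Finset ℕ), (Set.InjOn (fun n : ℕ => ((n:ℤ) - m).natAbs) s) →
            ∑ n ∈ s, r ^ ((n:ℤ) - m).natAbs ≤ (1 - r)⁻¹ := by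
          intro s hinj
          calc ∑ n ∈ s, r ^ ((n:ℤ) - m).natAbs
              = ∑ k ∈ s.image (fun n : ℕ => ((n:ℤ) - m).natAbs), r ^ k := by
                rw [Finset.sum_image]
                intro a ha b hb hab
                exact hinj (by simpa using ha) (by simpa using hb) hab
            _ ≤ ∑' k : ℕ, r ^ k := by
                refine Summable.sum_le_tsum _ (fun k _ => by positivity) hsum
            _ = (1 - r)⁻¹ := htsum
        have h1 := part (T.filter (fun n => m ≤ (n:ℤ))) ?_
        have h2 := part (T.filter (fun n => ¬ m ≤ (n:ℤ))) ?_
        · linarith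
        · intro a ha b hb hab
          simp only [Finset.coe_filter, Set.mem_setOf_eq, Finset.mem_filter] at ha hb
          simp only at hab
          omega
        · intro a ha b hb hab
          simp only [Finset.coe_filter, Set.mem_setOf_eq, Finset.mem_filter] at ha hb
          simp only at hab
          omega
    _ = 2 * Real.exp β * (1 - r)⁻¹ := by ring

/-- the number of `α : Fin p → ℕ` with `∑ α i = n` is at most `(n+1)^(p-1)`. -/
lemma aux_fiber_card (p n : ℕ) (hp : 1 ≤ p) (F : Finset (Fin p → ℕ)) :
    (F.filter (fun α => ∑ i, α i = n)).card ≤ (n + 1) ^ (p - 1) := by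
  classical
  have hbound : ∀ α ∈ F.filter (fun α => ∑ i, α i = n), ∀ j : Fin p, α j ≤ n := by
    intro α hα j
    rw [Finset.mem_filter] at hα
    have := Finset.single_le_sum (f := α) (fun i _ => Nat.zero_le _) (Finset.mem_univ j)
    omega
  have hcard : (Finset.univ : Finset (Fin (p-1) → Fin (n+1))).card = (n+1)^(p-1) := by
    simp [Fintype.card_fun]
  rw [← hcard]
  refine Finset.card_le_card_of_injOn
    (fun α => fun i : Fin (p-1) => (⟨α ⟨i.1, Nat.lt_of_lt_of_le i.2 (Nat.sub_le p 1)⟩ % (n+1), Nat.mod_lt _ (Nat.succ_pos n)⟩ : Fin (n+1)))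
    (fun _ _ => Finset.mem_univ _) ?_
  intro α hα α' hα' heq
  have hval : ∀ j : Fin p, j.1 < p - 1 → α j = α' j := by
    intro j hj
    have := congrFun heq ⟨j.1, hj⟩
    have h1 : α ⟨j.1, Nat.lt_of_lt_of_le hj (Nat.sub_le p 1)⟩ % (n+1) = α' ⟨j.1, Nat.lt_of_lt_of_le hj (Nat.sub_le p 1)⟩ % (n+1) := by
      simpa [Fin.ext_iff] using this
    have ha := hbound α (by simpa using hα) ⟨j.1, Nat.lt_of_lt_of_le hj (Nat.sub_le p 1)⟩
    have hb := hbound α' (by simpa using hα') ⟨j.1, Nat.lt_of_lt_of_le hj (Nat.sub_le p 1)⟩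
    rw [Nat.mod_eq_of_lt (Nat.lt_succ_of_le ha), Nat.mod_eq_of_lt (Nat.lt_succ_of_le hb)] at h1
    have hjj : (⟨j.1, Nat.lt_of_lt_of_le hj (Nat.sub_le p 1)⟩ : Fin p) = j := by ext; rfl
    rwa [hjj] at h1
  simp only [Finset.coe_filter, Set.mem_setOf_eq, Finset.mem_filter] at hα hα'
  funext j
  by_cases hj : j.1 < p - 1
  · exact hval j hj
  · have hj' : j.1 = p - 1 := by omega
    have hlast : (j : Fin p) = ⟨p-1, by omega⟩ := by ext; exact hj'
    have hsum : ∑ i, α i = ∑ i, α' i := by rw [hα.2, hα'.2]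
    have hsplit : ∀ (g : Fin p → ℕ), ∑ i, g i = g j + ∑ i ∈ Finset.univ.erase j, g i := by
      intro g
      rw [← Finset.add_sum_erase _ g (Finset.mem_univ j)]
    rw [hsplit α, hsplit α'] at hsum
    have herase : ∑ i ∈ Finset.univ.erase j, α i = ∑ i ∈ Finset.univ.erase j, α' i := by
      refine Finset.sum_congr rfl ?_
      intro i hi
      have hne : i ≠ j := (Finset.mem_erase.mp hi).1
      have : i.1 < p - 1 := by
        have : i.1 ≠ p - 1 := by
          intro h
          exact hne (by ext; rw [h, hj'])
        omega
      exact hval i this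
    omega

lemma aux_pointwise (τ δ : ℝ) (hτ : 0 < τ) (hτδ : τ < δ) {lam : ℝ} (hlam : 0 < lam) (S : ℝ) :
    (2:ℝ) ^ S * min 1 ((lam * (2:ℝ) ^ (S * δ)) ^ (-1/τ)) ≤
      lam ^ (-1/δ) * Real.exp (-(min (1/δ) (1/τ - 1/δ) *
        |Real.log lam + S * (δ * Real.log 2)|)) := by
  have hδ : 0 < δ := hτ.trans hτδ
  set a : ℝ := min (1/δ) (1/τ - 1/δ) with ha_def
  have ha : 0 < a := by
    apply lt_min (by positivity)
    have : 1/δ < 1/τ := one_div_lt_one_div_of_lt hτ hτδ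
    linarith
  set y : ℝ := lam * (2:ℝ) ^ (S * δ) with hy_def
  have hy : 0 < y := by positivity
  have hlogy : Real.log y = Real.log lam + S * (δ * Real.log 2) := by
    rw [hy_def, Real.log_mul (ne_of_gt hlam) (by positivity), Real.log_rpow two_pos]
    ring
  have h2S : (2:ℝ) ^ S = lam ^ (-1/δ) * y ^ (1/δ) := by
    have h1 : y ^ (1/δ) = lam ^ (1/δ) * (2:ℝ) ^ S := by
      rw [hy_def, Real.mul_rpow hlam.le (by positivity), ← Real.rpow_mul (by norm_num : (0:ℝ) ≤ 2)]
      congr 1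
      field_simp
    rw [h1, ← mul_assoc, ← Real.rpow_add hlam, show -1/δ + 1/δ = 0 by ring,
      Real.rpow_zero, one_mul]
  have key : y ^ (1/δ) * min 1 (y ^ (-1/τ)) ≤ Real.exp (-(a * |Real.log y|)) := by
    rcases le_or_gt y 1 with hy1 | hy1
    · have hlog : Real.log y ≤ 0 := Real.log_nonpos hy.le hy1
      calc y ^ (1/δ) * min 1 (y ^ (-1/τ)) ≤ y ^ (1/δ) * 1 := by
            refine mul_le_mul_of_nonneg_left (min_le_left _ _) ?_
            positivity
        _ = Real.exp (Real.log y * (1/δ)) := by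
            rw [mul_one, Real.rpow_def_of_pos hy]
        _ ≤ Real.exp (-(a * |Real.log y|)) := by
            rw [Real.exp_le_exp, abs_of_nonpos hlog]
            have ha' : a ≤ 1/δ := min_le_left _ _
            have h4 : 0 ≤ (1/δ - a) * (-Real.log y) :=
              mul_nonneg (by linarith) (by linarith)
            have h5 : Real.log y * (1/δ) =
                -(a * -Real.log y) - (1/δ - a) * (-Real.log y) := by ring
            rw [h5]
            linarith [h4]
    · have hlog : 0 ≤ Real.log y := Real.log_nonneg hy1.le
      calc y ^ (1/δ) * min 1 (y ^ (-1/τ)) ≤ y ^ (1/δ) * y ^ (-1/τ) := by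
            refine mul_le_mul_of_nonneg_left (min_le_right _ _) ?_
            positivity
        _ = Real.exp (Real.log y * (1/δ + -1/τ)) := by
            rw [← Real.rpow_add hy, Real.rpow_def_of_pos hy]
        _ ≤ Real.exp (-(a * |Real.log y|)) := by
            rw [Real.exp_le_exp, abs_of_nonneg hlog]
            have ha' : a ≤ 1/τ - 1/δ := min_le_right _ _
            have h4 : 0 ≤ (1/τ - 1/δ - a) * Real.log y :=
              mul_nonneg (by linarith) hlog
            have h5 : Real.log y * (1/δ + -1/τ) =
                -(a * Real.log y) - (1/τ - 1/δ - a) * Real.log y := by ring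
            rw [h5]
            linarith [h4]
  calc (2:ℝ) ^ S * min 1 (y ^ (-1/τ))
      = lam ^ (-1/δ) * (y ^ (1/δ) * min 1 (y ^ (-1/τ))) := by rw [h2S]; ring
    _ ≤ lam ^ (-1/δ) * Real.exp (-(a * |Real.log y|)) := by
        refine mul_le_mul_of_nonneg_left key ?_
        positivity
    _ = lam ^ (-1/δ) * Real.exp (-(a * |Real.log lam + S * (δ * Real.log 2)|)) := by
        rw [hlogy]

/-- Summation formula (increasing exponents), `0 < τ < δ`:
`Σ_{α ∈ ℤ₊^p} 2^{+(α₁+⋯+α_p)} min{1, (λ 2^{+(α₁+⋯+α_p)δ})^{-1/τ}} ≤ C λ^{-1/δ}(|log λ|+1)^{p-1}`,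
expressed as a uniform bound over all finite partial sums. -/
theorem statement7 (p : ℕ) (hp : 1 ≤ p) (τ δ : ℝ) (hτ : 0 < τ) (hτδ : τ < δ) :
    ∃ C > 0, ∀ lam : ℝ, 0 < lam → ∀ F : Finset (Fin p → ℕ),
      ∑ α ∈ F, (2:ℝ) ^ (∑ i, (α i : ℝ)) *
          min 1 ((lam * (2:ℝ) ^ ((∑ i, (α i : ℝ)) * δ)) ^ (-1/τ))
        ≤ C * lam ^ (-1/δ) * (|Real.log lam| + 1) ^ (p - 1) := by
  classical
  have hδ : 0 < δ := hτ.trans hτδ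
  set a : ℝ := min (1/δ) (1/τ - 1/δ) with ha_def
  have ha : 0 < a := by
    apply lt_min (by positivity)
    have : 1/δ < 1/τ := one_div_lt_one_div_of_lt hτ hτδ
    linarith
  set c : ℝ := δ * Real.log 2 with hc_def
  have hc : 0 < c := by
    have := Real.log_pos (by norm_num : (1:ℝ) < 2)
    positivity
  set β : ℝ := a * c with hβ_def
  have hβ : 0 < β := mul_pos ha hc
  have hβ2 : 0 < β/2 := by linarith
  set k : ℕ := p - 1 with hk_def
  set K : ℝ := k.factorial * (2/β)^k * Real.exp (β/2) with hK_def
  have hK : 0 < K := by positivity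
  set G : ℝ := 2 * Real.exp (β/2) * (1 - Real.exp (-(β/2)))⁻¹ with hG_def
  have hG : 0 < G := by
    have h1 : Real.exp (-(β/2)) < 1 := Real.exp_lt_one_iff.mpr (by linarith)
    have h2 : 0 < 1 - Real.exp (-(β/2)) := by linarith
    positivity
  set D : ℝ := max 1 c⁻¹ with hD_def
  have hD1 : (1:ℝ) ≤ D := le_max_left _ _
  have hD : 0 < D := lt_of_lt_of_le one_pos hD1
  refine ⟨K * G * D^k, by positivity, ?_⟩
  intro lam hlam F
  set L : ℝ := Real.log lam with hL_def
  set u : ℝ := L / c with hu_def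
  have hcu : c * u = L := by
    rw [hu_def]; field_simp
  -- pointwise per-n bound
  have hgn : ∀ n : ℕ, (2:ℝ)^((n:ℝ)) * min 1 ((lam * (2:ℝ)^((n:ℝ)*δ))^(-1/τ)) ≤
      lam ^ (-1/δ) * Real.exp (-(β * |(n:ℝ) + u|)) := by
    intro n
    have h1 := aux_pointwise τ δ hτ hτδ hlam (n:ℝ)
    rw [← ha_def, ← hc_def, ← hL_def] at h1
    have h2 : a * |L + (n:ℝ) * c| = β * |(n:ℝ) + u| := by
      have h3 : L + (n:ℝ) * c = c * ((n:ℝ) + u) := by rw [mul_add, hcu]; ring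
      rw [h3, abs_mul, abs_of_pos hc, hβ_def]; ring
    rwa [h2] at h1
  set g : (Fin p → ℕ) → ℕ := fun α => ∑ i, α i with hg_def
  set f : (Fin p → ℕ) → ℝ := fun α => (2:ℝ) ^ (∑ i, (α i : ℝ)) *
      min 1 ((lam * (2:ℝ) ^ ((∑ i, (α i : ℝ)) * δ)) ^ (-1/τ)) with hf_def
  have hfib : (∑ n ∈ F.image g, ∑ α ∈ F.filter (fun α => g α = n), f α) = ∑ α ∈ F, f α :=
    Finset.sum_fiberwise_of_maps_to (fun x hx => Finset.mem_image_of_mem _ hx) f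
  have inner : ∀ n ∈ F.image g, ∑ α ∈ F.filter (fun α => g α = n), f α ≤
      ((n:ℝ)+1)^k * (lam ^ (-1/δ) * Real.exp (-(β * |(n:ℝ) + u|))) := by
    intro n _
    have hconst : ∀ α ∈ F.filter (fun α => g α = n), f α =
        (2:ℝ)^((n:ℝ)) * min 1 ((lam * (2:ℝ)^((n:ℝ)*δ))^(-1/τ)) := by
      intro α hα
      obtain ⟨-, hαn⟩ := Finset.mem_filter.mp hα
      have hcast : (∑ i, (α i : ℝ)) = (n:ℝ) := by
        rw [← hαn, hg_def]; push_cast; rfl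
      rw [hf_def]
      simp only
      rw [hcast]
    rw [Finset.sum_congr rfl hconst, Finset.sum_const, nsmul_eq_mul]
    have hcard := aux_fiber_card p n hp F
    have hcard' : ((F.filter (fun α => g α = n)).card : ℝ) ≤ ((n:ℝ)+1)^k := by
      rw [hk_def]
      exact_mod_cast hcard
    have hg0 : (0:ℝ) ≤ (2:ℝ)^((n:ℝ)) * min 1 ((lam * (2:ℝ)^((n:ℝ)*δ))^(-1/τ)) := by
      exact mul_nonneg (by positivity) (le_min (by norm_num) (by positivity))
    exact mul_le_mul hcard' (hgn n) hg0 (by positivity)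
  have step2 : ∀ n ∈ F.image g,
      ((n:ℝ)+1)^k * (lam ^ (-1/δ) * Real.exp (-(β * |(n:ℝ) + u|))) ≤
      (lam ^ (-1/δ) * (K * D^k * (|L|+1)^k)) * Real.exp (-(β/2 * |(n:ℝ) + u|)) := by
    intro n _
    set x : ℝ := |(n:ℝ) + u| with hx_def
    have hx : 0 ≤ x := abs_nonneg _
    have h1 : ((n:ℝ)+1)^k ≤ (x+1)^k * (|u|+1)^k := by
      rw [← mul_pow]
      apply pow_le_pow_left₀ (by positivity)
      have hnu : (n:ℝ) ≤ x + |u| := by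
        have e1 := le_abs_self ((n:ℝ)+u)
        have e2 := neg_abs_le u
        rw [hx_def]
        linarith
      nlinarith [abs_nonneg u, hx]
    have h3 : (x+1)^k ≤ K * Real.exp (β/2*x) := by
      have hpe := aux_pow_le_exp k (y := β/2*(x+1)) (by positivity)
      rw [mul_pow] at hpe
      have h4 : (x+1)^k = (2/β)^k * ((β/2)^k * (x+1)^k) := by
        rw [← mul_assoc, ← mul_pow]
        have : (2/β) * (β/2) = 1 := by field_simp
        rw [this, one_pow, one_mul]
      rw [h4]
      calc (2/β)^k * ((β/2)^k*(x+1)^k)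
          ≤ (2/β)^k * (k.factorial * Real.exp (β/2*(x+1))) :=
            mul_le_mul_of_nonneg_left hpe (by positivity)
        _ = K * Real.exp (β/2*x) := by
            rw [hK_def, show β/2*(x+1) = β/2 + β/2*x by ring, Real.exp_add]
            ring
    have h5 : |u| + 1 ≤ D * (|L|+1) := by
      have h6 : |u| ≤ |L| * D := by
        rw [hu_def, abs_div, abs_of_pos hc, div_eq_mul_inv]
        exact mul_le_mul_of_nonneg_left (le_max_right _ _) (abs_nonneg _)
      nlinarith [abs_nonneg L]
    have h7 : (|u|+1)^k ≤ D^k * (|L|+1)^k := by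
      rw [← mul_pow]
      exact pow_le_pow_left₀ (by positivity) h5 k
    have hexp : Real.exp (β/2*x) * Real.exp (-(β * x)) = Real.exp (-(β/2 * x)) := by
      rw [← Real.exp_add]; ring_nf
    calc ((n:ℝ)+1)^k * (lam ^ (-1/δ) * Real.exp (-(β * x)))
        ≤ ((x+1)^k * (|u|+1)^k) * (lam ^ (-1/δ) * Real.exp (-(β * x))) := by
          apply mul_le_mul_of_nonneg_right h1 (by positivity)
      _ ≤ ((K * Real.exp (β/2*x)) * (D^k * (|L|+1)^k)) * (lam ^ (-1/δ) * Real.exp (-(β * x))) := by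
          apply mul_le_mul_of_nonneg_right ?_ (by positivity)
          exact mul_le_mul h3 h7 (by positivity) (by positivity)
      _ = (lam ^ (-1/δ) * (K * D^k * (|L|+1)^k)) * (Real.exp (β/2*x) * Real.exp (-(β * x))) := by
          ring
      _ = (lam ^ (-1/δ) * (K * D^k * (|L|+1)^k)) * Real.exp (-(β/2 * x)) := by
          rw [hexp]
  calc ∑ α ∈ F, f α
      = ∑ n ∈ F.image g, ∑ α ∈ F.filter (fun α => g α = n), f α := hfib.symm
    _ ≤ ∑ n ∈ F.image g, ((n:ℝ)+1)^k * (lam ^ (-1/δ) * Real.exp (-(β * |(n:ℝ) + u|))) :=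
        Finset.sum_le_sum inner
    _ ≤ ∑ n ∈ F.image g, (lam ^ (-1/δ) * (K * D^k * (|L|+1)^k)) *
          Real.exp (-(β/2 * |(n:ℝ) + u|)) := Finset.sum_le_sum step2
    _ = (lam ^ (-1/δ) * (K * D^k * (|L|+1)^k)) *
          ∑ n ∈ F.image g, Real.exp (-(β/2 * |(n:ℝ) + u|)) := by
        rw [Finset.mul_sum]
    _ ≤ (lam ^ (-1/δ) * (K * D^k * (|L|+1)^k)) * G := by
        refine mul_le_mul_of_nonneg_left ?_ (by positivity)
        rw [hG_def]
        exact aux_geo hβ2 u (F.image g)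
    _ = K * G * D^k * lam ^ (-1/δ) * (|L|+1)^k := by ring
end

section
/- Let P be a polynomial on ℝ^d, B ⊂ ℚ^d finite, and suppose there exist constants 0 < c₁ < c₂ and exponents δ_for < δ_bac in (0,∞) and integers a, b ≥ 0 such that for all k ∈ ℤ: c₁·2^{k/δ_for}(|k|+1)^a ≤ |{x ∈ D_B : |P(x)| ≤ 2^k}| ≤ c₂·2^{k/δ_for}(|k|+1)^a when 2^k < 1, and c₁·2^{k/δ_bac}(|k|+1)^b ≤ |{x ∈ D_B : |P(x)| ≤ 2^k}| ≤ c₂·2^{k/δ_bac}(|k|+1)^b when 2^k ≥ 1. Then for ρ > 0, the integral ∫_{D_B} |P(x)|^{−ρ} dx is finite if and only if 1/δ_bac < ρ < 1/δ_for. -/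
/-!
Writing `t ^ (-ρ)` as comparable to `∑_{k : t ≤ 2 ^ k} 2 ^ (-ρ k)` (a geometric series starting at
`k = ⌈log₂ t⌉`; both sides are `∞` when `t ≤ 0`) and integrating over `D_B` shows that
`∫_{D_B} |P| ^ (-ρ)` is finite iff `∑_k 2 ^ (-ρ k) |{x ∈ D_B : |P x| ≤ 2 ^ k}|` is. By the sublevel
bounds this series is comparable to `∑_k 2 ^ (-ρ k) 2 ^ (k / δ) (|k| + 1) ^ e`, with `δ = δ_for` for
`k < 0` and `δ = δ_bac` for `k ≥ 0`. Each half is a polynomial times a geometric series, which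
converges iff its ratio `2 ^ (1 / δ_bac - ρ)`, resp. `2 ^ (ρ - 1 / δ_for)`, is below `1`.
-/

open Finset Real MeasureTheory

open scoped ENNReal

noncomputable def dyadicSum (ρ t : ℝ) : ℝ≥0∞ :=
  ∑' k : ℤ, if t ≤ (2 : ℝ) ^ (k : ℝ) then ENNReal.ofReal ((2 : ℝ) ^ (-ρ * k)) else 0

theorem tsum_ite_le_ofReal_two_rpow (ρ : ℝ) (m : ℤ) :
    (∑' k : ℤ, if m ≤ k then ENNReal.ofReal ((2 : ℝ) ^ (-ρ * k)) else 0) =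
      ENNReal.ofReal ((2 : ℝ) ^ (-ρ * m)) * (1 - ENNReal.ofReal ((2 : ℝ) ^ (-ρ)))⁻¹ := by
  have hinj : Function.Injective fun n : ℕ => m + n := fun i j h => by simpa using h
  have hsupp : Function.support (fun k : ℤ =>
      if m ≤ k then ENNReal.ofReal ((2 : ℝ) ^ (-ρ * k)) else 0) ⊆ Set.range fun n : ℕ => m + n := by
    intro k hk
    have hmk : m ≤ k := by by_contra h; simp [h] at hk
    exact ⟨(k - m).toNat, by simp only; omega⟩
  rw [← hinj.tsum_eq hsupp, ← ENNReal.tsum_geometric, ← ENNReal.tsum_mul_left]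
  refine tsum_congr fun n => ?_
  rw [if_pos (by omega), ← ENNReal.ofReal_pow (by positivity), ← ENNReal.ofReal_mul (by positivity),
    ← Real.rpow_mul_natCast (by norm_num), ← Real.rpow_add two_pos]
  push_cast
  ring_nf

theorem dyadicSum_of_pos (ρ : ℝ) {t : ℝ} (ht : 0 < t) :
    dyadicSum ρ t = ENNReal.ofReal ((2 : ℝ) ^ (-ρ * ⌈logb 2 t⌉)) *
      (1 - ENNReal.ofReal ((2 : ℝ) ^ (-ρ)))⁻¹ := by
  rw [dyadicSum, ← tsum_ite_le_ofReal_two_rpow]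
  simp only [Int.ceil_le, Real.logb_le_iff_le_rpow one_lt_two ht]

theorem dyadicSum_of_nonpos {ρ : ℝ} (hρ : 0 ≤ ρ) {t : ℝ} (ht : t ≤ 0) : dyadicSum ρ t = ⊤ := by
  have hinj : Function.Injective fun n : ℕ => -(n : ℤ) := fun i j h => by simpa using h
  refine top_unique ((ENNReal.tsum_const_eq_top_of_ne_zero one_ne_zero).symm.le.trans
    ((ENNReal.tsum_le_tsum fun n => ?_).trans (ENNReal.tsum_comp_le_tsum_of_injective hinj _)))
  rw [if_pos (ht.trans (by positivity)), ← ENNReal.ofReal_one]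
  refine ENNReal.ofReal_le_ofReal (Real.one_le_rpow one_le_two ?_)
  push_cast
  rw [neg_mul_neg]
  positivity

theorem rpow_neg_le_dyadicSum {ρ : ℝ} (hρ : 0 < ρ) (t : ℝ) :
    ENNReal.ofReal t ^ (-ρ) ≤ ENNReal.ofReal ((2 : ℝ) ^ ρ) * dyadicSum ρ t := by
  rcases le_or_gt t 0 with ht | ht
  · rw [dyadicSum_of_nonpos hρ.le ht, ENNReal.mul_top (by positivity)]
    exact le_top
  set m := ⌈logb 2 t⌉
  have hlt : (2 : ℝ) ^ ((m : ℝ) - 1) < t := by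
    rw [← Real.lt_logb_iff_rpow_lt one_lt_two ht]
    linarith [Int.ceil_lt_add_one (logb 2 t)]
  have hgeom : 1 ≤ (1 - ENNReal.ofReal ((2 : ℝ) ^ (-ρ)))⁻¹ := ENNReal.one_le_inv.2 tsub_le_self
  calc ENNReal.ofReal t ^ (-ρ) = ENNReal.ofReal (t ^ (-ρ)) := ENNReal.ofReal_rpow_of_pos ht
    _ ≤ ENNReal.ofReal (((2 : ℝ) ^ ((m : ℝ) - 1)) ^ (-ρ)) :=
        ENNReal.ofReal_le_ofReal (Real.rpow_le_rpow_of_nonpos (by positivity) hlt.le (by linarith))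
    _ = ENNReal.ofReal ((2 : ℝ) ^ ρ) * ENNReal.ofReal ((2 : ℝ) ^ (-ρ * m)) := by
        rw [← ENNReal.ofReal_mul (by positivity), ← Real.rpow_mul (by norm_num),
          ← Real.rpow_add two_pos]
        ring_nf
    _ ≤ ENNReal.ofReal ((2 : ℝ) ^ ρ) * dyadicSum ρ t := by
        rw [dyadicSum_of_pos ρ ht]
        gcongr
        exact le_mul_of_one_le_right' hgeom

theorem dyadicSum_le_rpow_neg {ρ : ℝ} (hρ : 0 < ρ) (t : ℝ) :
    dyadicSum ρ t ≤ (1 - ENNReal.ofReal ((2 : ℝ) ^ (-ρ)))⁻¹ * ENNReal.ofReal t ^ (-ρ) := by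
  rcases le_or_gt t 0 with ht | ht
  · rw [ENNReal.ofReal_of_nonpos ht, ENNReal.zero_rpow_of_neg (by linarith),
      ENNReal.mul_top (ENNReal.inv_ne_zero.2 (by simp))]
    exact le_top
  have hle : t ≤ (2 : ℝ) ^ (⌈logb 2 t⌉ : ℝ) := by
    rw [← Real.logb_le_iff_le_rpow one_lt_two ht]
    exact Int.le_ceil _
  rw [dyadicSum_of_pos ρ ht, mul_comm, ENNReal.ofReal_rpow_of_pos ht]
  gcongr
  rw [mul_comm, Real.rpow_mul (by norm_num)]
  exact Real.rpow_le_rpow_of_nonpos ht hle (by linarith)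

theorem lintegral_dyadicSum {α : Type*} [MeasurableSpace α] (μ : Measure α) {F : α → ℝ}
    (hF : Measurable F) (D : Set α) (ρ : ℝ) :
    ∫⁻ x in D, dyadicSum ρ (F x) ∂μ =
      ∑' k : ℤ, ENNReal.ofReal ((2 : ℝ) ^ (-ρ * k)) * μ {x ∈ D | F x ≤ (2 : ℝ) ^ (k : ℝ)} := by
  have hS : ∀ k : ℤ, MeasurableSet {x | F x ≤ (2 : ℝ) ^ (k : ℝ)} := fun k =>
    measurableSet_le hF measurable_const
  calc ∫⁻ x in D, dyadicSum ρ (F x) ∂μ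
      = ∫⁻ x in D, ∑' k : ℤ, {x | F x ≤ (2 : ℝ) ^ (k : ℝ)}.indicator
          (fun _ => ENNReal.ofReal ((2 : ℝ) ^ (-ρ * k))) x ∂μ := by
        simp only [dyadicSum, Set.indicator_apply, Set.mem_ofPred_eq]
    _ = ∑' k : ℤ, ENNReal.ofReal ((2 : ℝ) ^ (-ρ * k)) * μ {x ∈ D | F x ≤ (2 : ℝ) ^ (k : ℝ)} := by
        rw [lintegral_tsum fun k => (measurable_const.indicator (hS k)).aemeasurable]
        refine tsum_congr fun k => ?_
        rw [lintegral_indicator_const (hS k), Measure.restrict_apply (hS k), Set.inter_comm]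
        rfl

theorem setLIntegral_rpow_neg_ne_top_iff {α : Type*} [MeasurableSpace α] (μ : Measure α)
    {F : α → ℝ} (hF : Measurable F) (D : Set α) {ρ : ℝ} (hρ : 0 < ρ) :
    ∫⁻ x in D, ENNReal.ofReal (F x) ^ (-ρ) ∂μ ≠ ⊤ ↔
      ∑' k : ℤ, ENNReal.ofReal ((2 : ℝ) ^ (-ρ * k)) * μ {x ∈ D | F x ≤ (2 : ℝ) ^ (k : ℝ)} ≠ ⊤ := by
  rw [← lintegral_dyadicSum μ hF D ρ]
  have hq : (1 - ENNReal.ofReal ((2 : ℝ) ^ (-ρ)))⁻¹ ≠ ⊤ := by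
    rw [Ne, ENNReal.inv_eq_top, tsub_eq_zero_iff_le, not_le, ENNReal.ofReal_lt_one]
    exact Real.rpow_lt_one_of_one_lt_of_neg one_lt_two (by linarith)
  constructor
  · intro h
    refine ne_top_of_le_ne_top (ENNReal.mul_ne_top hq h) ?_
    rw [← lintegral_const_mul' _ _ hq]
    exact lintegral_mono fun x => dyadicSum_le_rpow_neg hρ (F x)
  · intro h
    refine ne_top_of_le_ne_top (ENNReal.mul_ne_top (ENNReal.ofReal_ne_top (r := (2 : ℝ) ^ ρ)) h) ?_
    rw [← lintegral_const_mul' _ _ ENNReal.ofReal_ne_top]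
    exact lintegral_mono fun x => rpow_neg_le_dyadicSum hρ (F x)

theorem ENNReal.tsum_ne_top_iff_summable_of_ofReal_le {ι : Type*} {u : ι → ℝ≥0∞} {g : ι → ℝ}
    (hg : ∀ i, 0 ≤ g i) {c₁ c₂ : ℝ} (hc₁ : 0 < c₁) (hlow : ∀ i, ENNReal.ofReal (c₁ * g i) ≤ u i)
    (hup : ∀ i, u i ≤ ENNReal.ofReal (c₂ * g i)) :
    ∑' i, u i ≠ ⊤ ↔ Summable g := by
  constructor
  · intro h
    have hle : ENNReal.ofReal c₁ * ∑' i, ENNReal.ofReal (g i) ≤ ∑' i, u i := by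
      rw [← ENNReal.tsum_mul_left]
      exact ENNReal.tsum_le_tsum fun i => (ENNReal.ofReal_mul hc₁.le).symm.le.trans (hlow i)
    have hfin : ∑' i, ENNReal.ofReal (g i) ≠ ⊤ := fun htop => by
      rw [htop, ENNReal.mul_top (by simpa using hc₁)] at hle
      exact h (top_unique hle)
    simpa only [ENNReal.toReal_ofReal (hg _)] using ENNReal.summable_toReal hfin
  · intro h
    exact ne_top_of_le_ne_top (h.mul_left c₂).tsum_ofReal_ne_top (ENNReal.tsum_le_tsum hup)

theorem summable_add_one_pow_mul_geometric_iff {x : ℝ} (hx : 0 ≤ x) (e : ℕ) :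
    Summable (fun n : ℕ => ((n : ℝ) + 1) ^ e * x ^ n) ↔ x < 1 := by
  constructor
  · intro h
    by_contra! hx1
    have hterm : ∀ n : ℕ, 1 ≤ ((n : ℝ) + 1) ^ e * x ^ n := fun n =>
      one_le_mul_of_one_le_of_one_le (one_le_pow₀ (by linarith [n.cast_nonneg (α := ℝ)]))
        (one_le_pow₀ hx1)
    exact absurd (ge_of_tendsto' h.tendsto_atTop_zero hterm) (by norm_num)
  · intro hx1
    have hnorm : ‖x‖ < 1 := by rwa [Real.norm_of_nonneg hx]
    have hsum := summable_sum fun j (_ : j ∈ range (e + 1)) =>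
      (summable_pow_mul_geometric_of_norm_lt_one j hnorm).mul_left (e.choose j : ℝ)
    refine hsum.congr fun n => ?_
    rw [add_pow, Finset.sum_mul]
    refine Finset.sum_congr rfl fun j _ => ?_
    ring

theorem summable_two_rpow_mul_add_one_pow_iff (s : ℝ) (e : ℕ) :
    Summable (fun n : ℕ => (2 : ℝ) ^ (s * n) * ((n : ℝ) + 1) ^ e) ↔ s < 0 := by
  have heq : (fun n : ℕ => (2 : ℝ) ^ (s * n) * ((n : ℝ) + 1) ^ e) =
      fun n : ℕ => ((n : ℝ) + 1) ^ e * ((2 : ℝ) ^ s) ^ n := by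
    ext n; rw [Real.rpow_mul_natCast (by norm_num), mul_comm]
  rw [heq, summable_add_one_pow_mul_geometric_iff (by positivity),
    Real.rpow_lt_one_iff_of_pos two_pos]
  norm_num

noncomputable def sublevelBound (δf δb : ℝ) (a b : ℕ) (k : ℤ) : ℝ :=
  if k < 0 then (2 : ℝ) ^ ((k : ℝ) / δf) * (|(k : ℝ)| + 1) ^ a
  else (2 : ℝ) ^ ((k : ℝ) / δb) * (|(k : ℝ)| + 1) ^ b

theorem sublevelBound_nonneg (δf δb : ℝ) (a b : ℕ) (k : ℤ) : 0 ≤ sublevelBound δf δb a b k := by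
  unfold sublevelBound
  split_ifs <;> positivity

theorem summable_two_rpow_mul_sublevelBound_iff (δf δb ρ : ℝ) (a b : ℕ) :
    Summable (fun k : ℤ => (2 : ℝ) ^ (-ρ * k) * sublevelBound δf δb a b k) ↔
      1 / δb < ρ ∧ ρ < 1 / δf := by
  set u := fun k : ℤ => (2 : ℝ) ^ (-ρ * k) * sublevelBound δf δb a b k
  have hnonneg : (fun n : ℕ => u n) =
      fun n : ℕ => (2 : ℝ) ^ ((1 / δb - ρ) * n) * ((n : ℝ) + 1) ^ b := by
    ext n
    simp only [u, sublevelBound, if_neg (Int.natCast_nonneg n).not_gt, Int.cast_natCast,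
      abs_of_nonneg n.cast_nonneg (α := ℝ), ← mul_assoc, ← Real.rpow_add two_pos]
    ring_nf
  have hneg : (fun n : ℕ => u (-(n + 1 : ℕ))) =
      fun n : ℕ => (2 : ℝ) ^ ((ρ - 1 / δf) * (n + 1 : ℕ)) * (((n + 1 : ℕ) : ℝ) + 1) ^ a := by
    ext n
    have hk : -((n + 1 : ℕ) : ℤ) < 0 := by omega
    simp only [u, sublevelBound, if_pos hk, Int.cast_neg, Int.cast_natCast, abs_neg,
      abs_of_nonneg (n + 1).cast_nonneg (α := ℝ), ← mul_assoc, ← Real.rpow_add two_pos]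
    ring_nf
  rw [summable_int_iff_summable_nat_and_neg, ← summable_nat_add_iff 1 (f := fun n : ℕ => u (-n)),
    hnonneg, hneg,
    summable_nat_add_iff 1 (f := fun n : ℕ => (2 : ℝ) ^ ((ρ - 1 / δf) * n) * ((n : ℝ) + 1) ^ a),
    summable_two_rpow_mul_add_one_pow_iff, summable_two_rpow_mul_add_one_pow_iff, sub_neg, sub_neg]

theorem statement17_general (d : ℕ) (P : MvPolynomial (Fin d) ℝ) (B : Finset (Fin d → ℝ))
    (c₁ c₂ δf δb : ℝ) (hc₁ : 0 < c₁)
    (a b : ℕ)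
    (hlow : ∀ k : ℤ, k < 0 →
      ENNReal.ofReal (c₁ * (2:ℝ) ^ ((k:ℝ) / δf) * (|(k:ℝ)| + 1) ^ a)
          ≤ volume {x ∈ Dom (↑B : Set (Fin d → ℝ)) |
              |MvPolynomial.eval x P| ≤ (2:ℝ) ^ (k:ℝ)} ∧
        volume {x ∈ Dom (↑B : Set (Fin d → ℝ)) |
              |MvPolynomial.eval x P| ≤ (2:ℝ) ^ (k:ℝ)}
          ≤ ENNReal.ofReal (c₂ * (2:ℝ) ^ ((k:ℝ) / δf) * (|(k:ℝ)| + 1) ^ a))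
    (hhigh : ∀ k : ℤ, 0 ≤ k →
      ENNReal.ofReal (c₁ * (2:ℝ) ^ ((k:ℝ) / δb) * (|(k:ℝ)| + 1) ^ b)
          ≤ volume {x ∈ Dom (↑B : Set (Fin d → ℝ)) |
              |MvPolynomial.eval x P| ≤ (2:ℝ) ^ (k:ℝ)} ∧
        volume {x ∈ Dom (↑B : Set (Fin d → ℝ)) |
              |MvPolynomial.eval x P| ≤ (2:ℝ) ^ (k:ℝ)}
          ≤ ENNReal.ofReal (c₂ * (2:ℝ) ^ ((k:ℝ) / δb) * (|(k:ℝ)| + 1) ^ b))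
    (ρ : ℝ) (hρ : 0 < ρ) :
    (∫⁻ x in Dom (↑B : Set (Fin d → ℝ)),
        (ENNReal.ofReal |MvPolynomial.eval x P|) ^ (-ρ)) ≠ ⊤
      ↔ (1 / δb < ρ ∧ ρ < 1 / δf) := by
  have hV : ∀ k : ℤ,
      ENNReal.ofReal (c₁ * sublevelBound δf δb a b k) ≤ volume {x ∈ Dom (↑B : Set (Fin d → ℝ)) |
          |MvPolynomial.eval x P| ≤ (2:ℝ) ^ (k:ℝ)} ∧
        volume {x ∈ Dom (↑B : Set (Fin d → ℝ)) | |MvPolynomial.eval x P| ≤ (2:ℝ) ^ (k:ℝ)} ≤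
          ENNReal.ofReal (c₂ * sublevelBound δf δb a b k) := by
    intro k
    rcases lt_or_ge k 0 with hk | hk
    · simpa only [sublevelBound, if_pos hk, mul_assoc] using hlow k hk
    · simpa only [sublevelBound, if_neg hk.not_gt, mul_assoc] using hhigh k hk
  have hweight : ∀ (c : ℝ) (k : ℤ),
      ENNReal.ofReal (c * ((2 : ℝ) ^ (-ρ * k) * sublevelBound δf δb a b k)) =
        ENNReal.ofReal ((2 : ℝ) ^ (-ρ * k)) * ENNReal.ofReal (c * sublevelBound δf δb a b k) := by
    intro c k
    rw [mul_left_comm, ENNReal.ofReal_mul (by positivity)]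
  rw [setLIntegral_rpow_neg_ne_top_iff volume (MvPolynomial.continuous_eval P).measurable.abs _ hρ,
    ENNReal.tsum_ne_top_iff_summable_of_ofReal_le
      (fun k => mul_nonneg (by positivity) (sublevelBound_nonneg δf δb a b k)) hc₁
      (fun k => (hweight c₁ k).trans_le (mul_le_mul_right (hV k).1 _))
      (fun k => (mul_le_mul_right (hV k).2 _).trans_eq (hweight c₂ k).symm),
    summable_two_rpow_mul_sublevelBound_iff]

/-- Two-sided sublevel-set bounds for `(P, D_B)` with exponents `δ_for < δ_bac` imply that
`∫_{D_B} |P|^{-ρ}` is finite iff `1/δ_bac < ρ < 1/δ_for`. -/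
theorem statement17 (d : ℕ) (P : MvPolynomial (Fin d) ℝ) (B : Finset (Fin d → ℝ))
    (hB : ∀ b ∈ B, ∀ ν, ∃ s : ℚ, b ν = (s : ℝ))
    (c₁ c₂ δf δb : ℝ) (hc₁ : 0 < c₁) (hc₁₂ : c₁ < c₂)
    (hδf : 0 < δf) (hδ : δf < δb) (a b : ℕ)
    (hlow : ∀ k : ℤ, k < 0 →
      ENNReal.ofReal (c₁ * (2:ℝ) ^ ((k:ℝ) / δf) * (|(k:ℝ)| + 1) ^ a)
          ≤ volume {x ∈ Dom (↑B : Set (Fin d → ℝ)) |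
              |MvPolynomial.eval x P| ≤ (2:ℝ) ^ (k:ℝ)} ∧
        volume {x ∈ Dom (↑B : Set (Fin d → ℝ)) |
              |MvPolynomial.eval x P| ≤ (2:ℝ) ^ (k:ℝ)}
          ≤ ENNReal.ofReal (c₂ * (2:ℝ) ^ ((k:ℝ) / δf) * (|(k:ℝ)| + 1) ^ a))
    (hhigh : ∀ k : ℤ, 0 ≤ k →
      ENNReal.ofReal (c₁ * (2:ℝ) ^ ((k:ℝ) / δb) * (|(k:ℝ)| + 1) ^ b)
          ≤ volume {x ∈ Dom (↑B : Set (Fin d → ℝ)) |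
              |MvPolynomial.eval x P| ≤ (2:ℝ) ^ (k:ℝ)} ∧
        volume {x ∈ Dom (↑B : Set (Fin d → ℝ)) |
              |MvPolynomial.eval x P| ≤ (2:ℝ) ^ (k:ℝ)}
          ≤ ENNReal.ofReal (c₂ * (2:ℝ) ^ ((k:ℝ) / δb) * (|(k:ℝ)| + 1) ^ b))
    (ρ : ℝ) (hρ : 0 < ρ) :
    (∫⁻ x in Dom (↑B : Set (Fin d → ℝ)),
        (ENNReal.ofReal |MvPolynomial.eval x P|) ^ (-ρ)) ≠ ⊤
      ↔ (1 / δb < ρ ∧ ρ < 1 / δf) :=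
  statement17_general d P B c₁ c₂ δf δb hc₁ a b hlow hhigh ρ hρ
end
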